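/- arXiv:2007.05628 — 4 statements merged into one kernel-verified Lean document; each statement's English description precedes it below -/
import Mathlib

section
/- Let Q be a finite group, G a Q-group, and A an abelian group with trivial G- and Q-actions such that |Q| is invertible in A. Then the natural map i_* : H_*^Q(G, A) → H_*(G, A)^Q, induced by the inclusion of the subcomplex of Q-invariant chains into the full bar complex, is an isomorphism in every degree. -/
open Finsupp

namespace InvariantHomology

noncomputable section

/-- Inhomogeneous `n`-chains of `G` with coefficients in the abelian group `A`
(with trivial action): the free `A`-span of `n`-tuples of elements of `G`. -/
abbrev Ch (G A : Type*) [AddCommGroup A] (n : ℕ) : Type _ := (Fin n → G) →₀ A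

/-- The `i`-th inner face of an inhomogeneous `(n+1)`-tuple: multiply the `i`-th and
`(i+1)`-st entries. -/
def fm {G : Type*} [Group G] {n : ℕ} (g : Fin (n + 1) → G) (i : Fin n) : Fin n → G :=
  fun j =>
    if (j : ℕ) < (i : ℕ) then g j.castSucc
    else if j = i then g i.castSucc * g i.succ
    else g j.succ

variable (G A : Type*) [Group G] [AddCommGroup A]

/-- The differential of the bar complex (with trivial coefficients):
`d[g₁|⋯|g_{n+1}] = [g₂|⋯|g_{n+1}] + ∑ᵢ (-1)ⁱ [g₁|⋯|gᵢgᵢ₊₁|⋯|g_{n+1}] + (-1)^{n+1} [g₁|⋯|gₙ]`. -/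
def bd (n : ℕ) : Ch G A (n + 1) →+ Ch G A n :=
  Finsupp.liftAddHom fun g =>
    (Finsupp.singleAddHom (Fin.tail g) : A →+ Ch G A n)
      + ∑ i : Fin n, ((-1 : ℤ) ^ ((i : ℕ) + 1)) • (Finsupp.singleAddHom (fm g i) : A →+ Ch G A n)
      + ((-1 : ℤ) ^ (n + 1)) • (Finsupp.singleAddHom (Fin.init g) : A →+ Ch G A n)

/-- The differential, re-indexed as a map `Cₙ → C_{n-1}` (zero for `n = 0`). -/
def dd : ∀ n : ℕ, Ch G A n →+ Ch G A (n - 1)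
  | 0 => 0
  | n + 1 => bd G A n

/-- Cycles. -/
def cyc (n : ℕ) : AddSubgroup (Ch G A n) := (dd G A n).ker

/-- Boundaries. -/
def bdry (n : ℕ) : AddSubgroup (Ch G A n) := (bd G A n).range

/-- The group homology `Hₙ(G, A)` with trivial coefficients, computed from the bar complex. -/
def Hn (n : ℕ) : Type _ := cyc G A n ⧸ ((bdry G A n).addSubgroupOf (cyc G A n))

instance (n : ℕ) : AddCommGroup (Hn G A n) :=
  QuotientAddGroup.Quotient.addCommGroup _

variable (Q : Type*) [Group Q] [MulDistribMulAction Q G]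

/-- The action of `q : Q` on chains, `q • [g₁|⋯|gₙ] = [q g₁|⋯|q gₙ]`. -/
def qch (q : Q) (n : ℕ) : Ch G A n →+ Ch G A n :=
  Finsupp.mapDomain.addMonoidHom fun g : Fin n → G => q • g

/-- The subgroup of `Q`-invariant chains. -/
def invCh (n : ℕ) : AddSubgroup (Ch G A n) where
  carrier := { x | ∀ q : Q, qch G A Q q n x = x }
  add_mem' := by intro a b ha hb q; rw [map_add, ha q, hb q]
  zero_mem' := fun q => map_zero _
  neg_mem' := by intro a ha q; rw [map_neg, ha q]

/-- Invariant cycles. -/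
def cycQ (n : ℕ) : AddSubgroup (Ch G A n) := cyc G A n ⊓ invCh G A Q n

/-- Boundaries of invariant chains. -/
def bdryQ (n : ℕ) : AddSubgroup (Ch G A n) := (invCh G A Q (n + 1)).map (bd G A n)

/-- The homology `Hₙ^Q(G, A)` of the subcomplex of `Q`-invariant chains. -/
def HQ (n : ℕ) : Type _ := cycQ G A Q n ⧸ ((bdryQ G A Q n).addSubgroupOf (cycQ G A Q n))

instance (n : ℕ) : AddCommGroup (HQ G A Q n) :=
  QuotientAddGroup.Quotient.addCommGroup _

/-- The natural map `H_*^Q(G, A) → H_*(G, A)` induced by the inclusion of the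
invariant subcomplex in the bar complex. -/
def iStar (n : ℕ) : HQ G A Q n →+ Hn G A n :=
  QuotientAddGroup.map _ _
    (AddSubgroup.inclusion (inf_le_left : cycQ G A Q n ≤ cyc G A n))
    (by
      intro x hx
      rw [AddSubgroup.mem_addSubgroupOf] at hx
      obtain ⟨y, -, hy⟩ := hx
      exact ⟨y, hy⟩)

theorem tail_qsmul (q : Q) {n : ℕ} (g : Fin (n + 1) → G) :
    Fin.tail (q • g) = q • Fin.tail g := rfl

theorem init_qsmul (q : Q) {n : ℕ} (g : Fin (n + 1) → G) :
    Fin.init (q • g) = q • Fin.init g := rfl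

theorem fm_qsmul (q : Q) {n : ℕ} (g : Fin (n + 1) → G) (i : Fin n) :
    fm (q • g) i = q • fm g i := by
  funext j
  simp only [fm, Pi.smul_apply]
  split_ifs <;> simp [smul_mul']

theorem qch_single (q : Q) {n : ℕ} (g : Fin n → G) (a : A) :
    qch G A Q q n (Finsupp.single g a) = Finsupp.single (q • g) a :=
  Finsupp.mapDomain_single

theorem bd_single {n : ℕ} (g : Fin (n + 1) → G) (a : A) :
    bd G A n (Finsupp.single g a) =
      Finsupp.single (Fin.tail g) a
        + ∑ i : Fin n, ((-1 : ℤ) ^ ((i : ℕ) + 1)) • Finsupp.single (fm g i) a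
        + ((-1 : ℤ) ^ (n + 1)) • Finsupp.single (Fin.init g) a := by
  simp [bd, Finsupp.liftAddHom_apply_single]

theorem bd_qch (q : Q) (n : ℕ) :
    (bd G A n).comp (qch G A Q q (n + 1)) = (qch G A Q q n).comp (bd G A n) := by
  refine Finsupp.addHom_ext fun g a => ?_
  simp only [AddMonoidHom.comp_apply, qch_single, bd_single, map_add, map_sum, map_zsmul,
    tail_qsmul, init_qsmul, fm_qsmul]

theorem dd_qch (q : Q) (n : ℕ) :
    (dd G A n).comp (qch G A Q q n) = (qch G A Q q (n - 1)).comp (dd G A n) := by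
  cases n with
  | zero => ext g a; simp [dd]
  | succ n => exact bd_qch G A Q q n

/-- The action of `q : Q` on cycles. -/
def qcyc (q : Q) (n : ℕ) : cyc G A n →+ cyc G A n :=
  ((qch G A Q q n).comp (cyc G A n).subtype).codRestrict _ (by
    intro x
    have hx : dd G A n (x : Ch G A n) = 0 := x.2
    have := congrArg (fun f : Ch G A n →+ Ch G A (n - 1) => f (x : Ch G A n)) (dd_qch G A Q q n)
    simp only [AddMonoidHom.comp_apply] at this
    simp only [AddMonoidHom.comp_apply, AddSubgroup.coe_subtype]
    show qch G A Q q n (x : Ch G A n) ∈ cyc G A n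
    have hmem : dd G A n (qch G A Q q n (x : Ch G A n)) = 0 := by
      rw [this, hx, map_zero]
    exact hmem)

/-- The induced action of `q : Q` on the homology `Hₙ(G, A)`. -/
def qHn (q : Q) (n : ℕ) : Hn G A n →+ Hn G A n :=
  QuotientAddGroup.map _ _ (qcyc G A Q q n) (by
    intro x hx
    rw [AddSubgroup.mem_addSubgroupOf] at hx
    obtain ⟨y, hy⟩ := hx
    rw [AddSubgroup.mem_comap, AddSubgroup.mem_addSubgroupOf]
    refine ⟨qch G A Q q (n + 1) y, ?_⟩
    have := congrArg (fun f : Ch G A (n+1) →+ Ch G A n => f y) (bd_qch G A Q q n)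
    simp only [AddMonoidHom.comp_apply] at this
    show bd G A n (qch G A Q q (n+1) y) = _
    rw [this, hy]
    rfl)

/-- The subgroup of `Q`-invariant homology classes `Hₙ(G, A)^Q`. -/
def HnInv (n : ℕ) : AddSubgroup (Hn G A n) where
  carrier := { x | ∀ q : Q, qHn G A Q q n x = x }
  add_mem' := by intro a b ha hb q; rw [map_add, ha q, hb q]
  zero_mem' := fun q => map_zero _
  neg_mem' := by intro a ha q; rw [map_neg, ha q]

theorem qch_mul (q q' : Q) (n : ℕ) :
    qch G A Q (q * q') n = (qch G A Q q n).comp (qch G A Q q' n) := by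
  refine Finsupp.addHom_ext fun g a => ?_
  simp [qch_single, mul_smul]

theorem qHn_mul (q q' : Q) (n : ℕ) (x : Hn G A n) :
    qHn G A Q q n (qHn G A Q q' n x) = qHn G A Q (q * q') n x := by
  induction x using QuotientAddGroup.induction_on with
  | H z =>
    show QuotientAddGroup.mk (qcyc G A Q q n (qcyc G A Q q' n z))
      = QuotientAddGroup.mk (qcyc G A Q (q * q') n z)
    congr 1
    refine Subtype.ext ?_
    show qch G A Q q n (qch G A Q q' n (z : Ch G A n)) = qch G A Q (q * q') n (z : Ch G A n)
    rw [qch_mul]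
    rfl

/-- The subgroup of `Hₙ(G, A)` generated by the elements `y - q • y`. -/
def coinvRel (n : ℕ) : AddSubgroup (Hn G A n) :=
  AddSubgroup.closure {x | ∃ (q : Q) (y : Hn G A n), x = y - qHn G A Q q n y}

/-- The coinvariants `Hₙ(G, A)_Q` of the `Q`-action on homology. -/
def HnCoinv (n : ℕ) : Type _ := Hn G A n ⧸ coinvRel G A Q n

instance (n : ℕ) : AddCommGroup (HnCoinv G A Q n) :=
  QuotientAddGroup.Quotient.addCommGroup _

/-- The norm map `Hₙ(G, A)_Q → Hₙ(G, A)`, sending the class of `x` to `∑_{q ∈ Q} q • x`. -/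
def normHn [Fintype Q] (n : ℕ) : HnCoinv G A Q n →+ Hn G A n :=
  QuotientAddGroup.lift _ (∑ q : Q, qHn G A Q q n) (by
    rw [coinvRel, AddSubgroup.closure_le]
    rintro x ⟨q', y, rfl⟩
    simp only [SetLike.mem_coe, AddMonoidHom.mem_ker, map_sub, AddMonoidHom.finset_sum_apply]
    rw [sub_eq_zero]
    refine Fintype.sum_equiv (Equiv.mulRight q'⁻¹) _ _ fun q => ?_
    show qHn G A Q q n y = qHn G A Q (q * q'⁻¹) n (qHn G A Q q' n y)
    rw [qHn_mul, inv_mul_cancel_right])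

section Norm1

variable (G : Type*) [Group G] (Q : Type*) [Group Q] [MulDistribMulAction Q G] [Fintype Q]

/-- The `Q`-invariant `1`-chain `∑_{q ∈ Q} [q • g]` associated to `g : G`. -/
def ncyc (g : G) : Ch G ℤ 1 :=
  ∑ q : Q, Finsupp.single (fun _ : Fin 1 => q • g) (1 : ℤ)

theorem ncyc_mem (g : G) : ncyc G Q g ∈ cycQ G ℤ Q 1 := by
  constructor
  · show dd G ℤ 1 (ncyc G Q g) = 0
    show bd G ℤ 0 (ncyc G Q g) = 0
    rw [ncyc, map_sum]
    refine Finset.sum_eq_zero fun q _ => ?_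
    rw [bd_single]
    have h : Fin.tail (fun _ : Fin 1 => q • g) = Fin.init (fun _ : Fin 1 => q • g) :=
      Subsingleton.elim _ _
    simp [h]
  · intro q'
    rw [ncyc, map_sum]
    simp only [qch_single]
    refine Fintype.sum_equiv (Equiv.mulLeft q') _ _ fun q => ?_
    congr 1
    funext _
    show q' • (q • g) = (q' * q) • g
    rw [mul_smul]

/-- The norm map `N : G → H₁^Q(G, ℤ)`, sending `g` to the class of `∑_{q ∈ Q} [q • g]`. -/
def NQ (g : G) : HQ G ℤ Q 1 :=
  QuotientAddGroup.mk ⟨ncyc G Q g, ncyc_mem G Q g⟩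

end Norm1

end

end InvariantHomology

/-! Averaging over the finite group, `e = |Q|⁻¹ ∑_{q ∈ Q} q`, is a chain map from the bar complex
onto the invariant subcomplex which is the identity on invariant chains. An invariant cycle
`z = ∂y` is therefore the boundary `∂(e y)` of an invariant chain, which gives injectivity. If
the class of a cycle `z` is `Q`-fixed, every `z - q z` is a boundary, hence so is
`z - e z = |Q|⁻¹ ∑_q (z - q z)`, and the invariant cycle `e z` is a preimage of the class. -/

namespace InvariantHomology

noncomputable section

section DivisionByScalar

variable {M N : Type*} [AddCommGroup M] [AddCommGroup N] {k : ℤ}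

def zsmulInv (hM : Function.Bijective fun m : M => k • m) : M →+ M :=
  (AddEquiv.ofBijective (DistribSMul.toAddMonoidHom M k) hM).symm.toAddMonoidHom

theorem zsmul_zsmulInv (hM : Function.Bijective fun m : M => k • m) (m : M) :
    k • zsmulInv hM m = m :=
  (AddEquiv.ofBijective (DistribSMul.toAddMonoidHom M k) hM).apply_symm_apply m

theorem zsmulInv_zsmul (hM : Function.Bijective fun m : M => k • m) (m : M) :
    zsmulInv hM (k • m) = m :=
  (AddEquiv.ofBijective (DistribSMul.toAddMonoidHom M k) hM).symm_apply_apply m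

theorem map_zsmulInv (hM : Function.Bijective fun m : M => k • m)
    (hN : Function.Bijective fun n : N => k • n) (f : M →+ N) (m : M) :
    f (zsmulInv hM m) = zsmulInv hN (f m) :=
  hN.1 <| by
    change k • f _ = k • _
    rw [← map_zsmul, zsmul_zsmulInv, zsmul_zsmulInv]

theorem bijective_zsmul_finsupp (α : Type*) (hM : Function.Bijective fun m : M => k • m) :
    Function.Bijective fun x : α →₀ M => k • x := by
  convert (Finsupp.mapRange.addEquiv
    (AddEquiv.ofBijective (DistribSMul.toAddMonoidHom M k) hM) : (α →₀ M) ≃+ (α →₀ M)).bijective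
    using 1
  funext x
  ext
  rfl

end DivisionByScalar

theorem mem_bdry_of_zsmul_mem {G A : Type*} [Group G] [AddCommGroup A] {k : ℤ}
    (hA : Function.Bijective fun a : A => k • a) {n : ℕ} {x : Ch G A n}
    (hx : k • x ∈ bdry G A n) : x ∈ bdry G A n := by
  obtain ⟨y, hy⟩ := hx
  refine ⟨zsmulInv (bijective_zsmul_finsupp _ hA) y, ?_⟩
  rw [map_zsmulInv _ (bijective_zsmul_finsupp _ hA), hy, zsmulInv_zsmul]

section Averaging

variable (G A Q : Type*) [Group G] [AddCommGroup A] [Group Q] [MulDistribMulAction Q G]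
  [Fintype Q]

def chainNorm (n : ℕ) : Ch G A n →+ Ch G A n := ∑ q : Q, qch G A Q q n

theorem chainNorm_apply (n : ℕ) (x : Ch G A n) :
    chainNorm G A Q n x = ∑ q : Q, qch G A Q q n x :=
  AddMonoidHom.finsetSum_apply _ _ _

theorem qch_chainNorm (q : Q) (n : ℕ) (x : Ch G A n) :
    qch G A Q q n (chainNorm G A Q n x) = chainNorm G A Q n x := by
  rw [chainNorm_apply, map_sum]
  exact Fintype.sum_equiv (Equiv.mulLeft q) _ _ fun q' =>
    (DFunLike.congr_fun (qch_mul G A Q q q' n) x).symm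

theorem chainNorm_of_mem_invCh {n : ℕ} {x : Ch G A n} (hx : x ∈ invCh G A Q n) :
    chainNorm G A Q n x = (Fintype.card Q : ℤ) • x := by
  rw [chainNorm_apply, Finset.sum_congr rfl fun q _ => hx q, Finset.sum_const, Finset.card_univ,
    natCast_zsmul]

theorem map_chainNorm {m n : ℕ} (f : Ch G A m →+ Ch G A n)
    (hf : ∀ q : Q, f.comp (qch G A Q q m) = (qch G A Q q n).comp f) (x : Ch G A m) :
    f (chainNorm G A Q m x) = chainNorm G A Q n (f x) := by
  rw [chainNorm_apply, chainNorm_apply, map_sum]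
  exact Finset.sum_congr rfl fun q _ => DFunLike.congr_fun (hf q) x

variable {G A Q} (hA : Function.Bijective fun a : A => (Fintype.card Q : ℤ) • a)

def chainAvg (n : ℕ) : Ch G A n →+ Ch G A n :=
  (zsmulInv (bijective_zsmul_finsupp (Fin n → G) hA)).comp (chainNorm G A Q n)

theorem chainAvg_mem_invCh (n : ℕ) (x : Ch G A n) : chainAvg hA n x ∈ invCh G A Q n := by
  intro q
  rw [chainAvg, AddMonoidHom.comp_apply, map_zsmulInv _ (bijective_zsmul_finsupp _ hA),
    qch_chainNorm]

theorem chainAvg_of_mem_invCh {n : ℕ} {x : Ch G A n} (hx : x ∈ invCh G A Q n) :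
    chainAvg hA n x = x := by
  rw [chainAvg, AddMonoidHom.comp_apply, chainNorm_of_mem_invCh G A Q hx, zsmulInv_zsmul]

theorem map_chainAvg {m n : ℕ} (f : Ch G A m →+ Ch G A n)
    (hf : ∀ q : Q, f.comp (qch G A Q q m) = (qch G A Q q n).comp f) (x : Ch G A m) :
    f (chainAvg hA m x) = chainAvg hA n (f x) := by
  rw [chainAvg, AddMonoidHom.comp_apply, map_zsmulInv _ (bijective_zsmul_finsupp _ hA),
    map_chainNorm G A Q f hf]
  rfl

theorem self_sub_chainAvg_mem_bdry {n : ℕ} {x : Ch G A n}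
    (hx : ∀ q : Q, x - qch G A Q q n x ∈ bdry G A n) : x - chainAvg hA n x ∈ bdry G A n := by
  refine mem_bdry_of_zsmul_mem hA ?_
  have hsum : (Fintype.card Q : ℤ) • (x - chainAvg hA n x) = ∑ q : Q, (x - qch G A Q q n x) := by
    rw [smul_sub, chainAvg, AddMonoidHom.comp_apply, zsmul_zsmulInv, chainNorm_apply,
      Finset.sum_sub_distrib, Finset.sum_const, Finset.card_univ, natCast_zsmul]
  rw [hsum]
  exact AddSubgroup.sum_mem _ fun q _ => hx q

end Averaging

section Homology

variable {G A Q : Type*} [Group G] [AddCommGroup A] [Group Q] [MulDistribMulAction Q G]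
  {n : ℕ}

theorem iStar_mk (z : cycQ G A Q n) :
    iStar G A Q n (QuotientAddGroup.mk z) =
      QuotientAddGroup.mk (AddSubgroup.inclusion inf_le_left z) :=
  rfl

theorem qHn_mk (q : Q) (z : cyc G A n) :
    qHn G A Q q n (QuotientAddGroup.mk z) = QuotientAddGroup.mk (qcyc G A Q q n z) :=
  rfl

theorem mk_eq_mk_iff_sub_mem_bdry (z w : cyc G A n) :
    (QuotientAddGroup.mk z : Hn G A n) = QuotientAddGroup.mk w ↔
      (w : Ch G A n) - z ∈ bdry G A n := by
  rw [QuotientAddGroup.eq, AddSubgroup.mem_addSubgroupOf, neg_add_eq_sub]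
  rfl

theorem iStar_mem_HnInv (x : HQ G A Q n) : iStar G A Q n x ∈ HnInv G A Q n := by
  induction x using QuotientAddGroup.induction_on with
  | H z =>
    intro q
    rw [iStar_mk, qHn_mk]
    exact congrArg _ (Subtype.ext ((AddSubgroup.mem_inf.mp z.2).2 q))

theorem self_sub_qch_mem_bdry {z : cyc G A n}
    (hz : (QuotientAddGroup.mk z : Hn G A n) ∈ HnInv G A Q n) (q : Q) :
    (z : Ch G A n) - qch G A Q q n z ∈ bdry G A n :=
  (mk_eq_mk_iff_sub_mem_bdry _ _).mp (hz q)

variable [Fintype Q]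

theorem iStar_injective (hA : Function.Bijective fun a : A => (Fintype.card Q : ℤ) • a) :
    Function.Injective (iStar G A Q n) := by
  rw [injective_iff_map_eq_zero]
  intro x hx
  induction x using QuotientAddGroup.induction_on with
  | H z =>
    obtain ⟨y, hy⟩ := (QuotientAddGroup.eq_zero_iff _).mp hx
    obtain ⟨-, hz⟩ := AddSubgroup.mem_inf.mp z.2
    refine (QuotientAddGroup.eq_zero_iff _).mpr
      ⟨chainAvg hA (n + 1) y, chainAvg_mem_invCh hA _ y, ?_⟩
    rw [map_chainAvg hA _ fun q => bd_qch G A Q q n, hy]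
    exact chainAvg_of_mem_invCh hA hz

theorem exists_iStar_eq_of_mem_HnInv
    (hA : Function.Bijective fun a : A => (Fintype.card Q : ℤ) • a) {x : Hn G A n}
    (hx : x ∈ HnInv G A Q n) :
    ∃ y, iStar G A Q n y = x := by
  induction x using QuotientAddGroup.induction_on with
  | H z =>
    have hcyc : chainAvg hA n z ∈ cyc G A n := by
      change dd G A n _ = 0
      rw [map_chainAvg hA _ fun q => dd_qch G A Q q n, z.2, map_zero]
    refine ⟨QuotientAddGroup.mk ⟨chainAvg hA n z, hcyc, chainAvg_mem_invCh hA n (z : Ch G A n)⟩,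
      (mk_eq_mk_iff_sub_mem_bdry _ _).mpr ?_⟩
    exact self_sub_chainAvg_mem_bdry hA (self_sub_qch_mem_bdry hx)

end Homology

end

end InvariantHomology

open InvariantHomology in
/-- If `Q` is finite with `|Q|` invertible in `A`, the natural map
`i_* : H_*^Q(G, A) → H_*(G, A)` induced by the inclusion of the invariant subcomplex is a
bijection onto the fixed points `H_*(G, A)^Q`, in every degree. -/
theorem invariant_homology_bijOn_fixedPoints
    (G A Q : Type*) [Group G] [AddCommGroup A] [Group Q] [MulDistribMulAction Q G] [Fintype Q]
    (hA : Function.Bijective fun a : A => (Fintype.card Q : ℤ) • a) (n : ℕ) :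
    Set.BijOn (iStar G A Q n) Set.univ ↑(HnInv G A Q n) :=
  ⟨fun x _ => iStar_mem_HnInv x, (iStar_injective hA).injOn,
    fun _ hx => (exists_iStar_eq_of_mem_HnInv hA hx).imp fun _ hy => ⟨trivial, hy⟩⟩
end

section
/- Let Q be a finite group, G a Q-group, and A an abelian group with trivial G- and Q-actions. If |Q| is invertible in A, then for every q ≥ 0 there is an isomorphism H_q^Q(G, A) ≅ H_q(G ⋊_φ Q, A), where G ⋊_φ Q is the semidirect product determined by the action φ of Q on G and A is given the trivial G ⋊_φ Q-action. -/
open Finsupp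

/-!
The inclusion `ι : G → G ⋊ Q` and the transfer `τ = ∑_{q ∈ Q} (q · -).left`, written on
homogeneous chains and read in bar coordinates, are chain maps between the `Q`-invariant bar
complex of `G` and the bar complex of `G ⋊ Q`. On invariant chains `τ ∘ ι = |Q|`. In the other
direction `ι ∘ τ` is homotopic to `|Q|`: averaging over `Q` a `G`-equivariant homotopy between the
identity and the retraction `y ↦ y.left` of `G ⋊ Q` onto `G`, obtained by the cone construction on
the free `G`-basis of tuples starting in `Q`. Dividing `τ` by `|Q|` thus inverts `ι` in homology.
-/

namespace InvariantHomology

open SemidirectProduct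

noncomputable section

section Subquotient

variable {M M' : Type*} [AddCommGroup M] [AddCommGroup M']
  {Z B : AddSubgroup M} {Z' B' : AddSubgroup M'}

def subquotientMap (f : M →+ M') (hZ : ∀ z ∈ Z, f z ∈ Z') (hB : ∀ b ∈ B, f b ∈ B') :
    Z ⧸ B.addSubgroupOf Z →+ Z' ⧸ B'.addSubgroupOf Z' :=
  QuotientAddGroup.map _ _ ((f.comp Z.subtype).codRestrict Z' fun z => hZ z z.2)
    fun _ hb => hB _ hb

def subquotientAddEquiv (f : M →+ M') (g : M' →+ M)
    (hfZ : ∀ z ∈ Z, f z ∈ Z') (hfB : ∀ b ∈ B, f b ∈ B')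
    (hgZ : ∀ z ∈ Z', g z ∈ Z) (hgB : ∀ b ∈ B', g b ∈ B)
    (hgf : ∀ z ∈ Z, g (f z) - z ∈ B) (hfg : ∀ z ∈ Z', f (g z) - z ∈ B') :
    Z ⧸ B.addSubgroupOf Z ≃+ Z' ⧸ B'.addSubgroupOf Z' where
  toFun := subquotientMap f hfZ hfB
  invFun := subquotientMap g hgZ hgB
  left_inv x := by
    induction x using QuotientAddGroup.induction_on with
    | H z =>
      refine (QuotientAddGroup.eq.2 ?_).symm
      rw [AddSubgroup.mem_addSubgroupOf, AddSubgroup.coe_add, AddSubgroup.coe_neg, neg_add_eq_sub]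
      exact hgf z z.2
  right_inv x := by
    induction x using QuotientAddGroup.induction_on with
    | H z =>
      refine (QuotientAddGroup.eq.2 ?_).symm
      rw [AddSubgroup.mem_addSubgroupOf, AddSubgroup.coe_add, AddSubgroup.coe_neg, neg_add_eq_sub]
      exact hfg z z.2
  map_add' := map_add _

end Subquotient

section BarComplex

variable {X Y A B : Type*} [AddCommGroup A] [AddCommGroup B]

def chainMap (ψ : X → Y) {m : ℕ} : Ch X A m →+ Ch Y A m :=
  mapDomain.addMonoidHom (ψ ∘ ·)

def coeffMap (φ : A →+ B) {m : ℕ} : Ch X A m →+ Ch X B m :=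
  mapRange.addMonoidHom φ

theorem chainMap_single (ψ : X → Y) {m : ℕ} (x : Fin m → X) (a : A) :
    chainMap ψ (single x a) = single (ψ ∘ x) a :=
  mapDomain_single

theorem coeffMap_single (φ : A →+ B) {m : ℕ} (x : Fin m → X) (a : A) :
    coeffMap φ (single x a) = single x (φ a) :=
  mapRange_single (hf := φ.map_zero)

theorem chainMap_chainMap {Z : Type*} (ψ : Y → Z) (χ : X → Y) {m : ℕ} (z : Ch X A m) :
    chainMap ψ (chainMap χ z) = chainMap (ψ ∘ χ) z :=
  (mapDomain_comp ..).symm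

theorem chainMap_coeffMap (ψ : X → Y) (φ : A →+ B) {m : ℕ} (z : Ch X A m) :
    chainMap ψ (coeffMap φ z) = coeffMap φ (chainMap ψ z) :=
  mapDomain_mapRange _ _ _ φ.map_zero φ.map_add

theorem coeffMap_zsmul_of_leftInverse (φ : A →+ A) {k : ℤ} (hφ : ∀ a, φ (k • a) = a)
    {m : ℕ} (z : Ch X A m) : coeffMap φ (k • z) = z := by
  ext x
  simp [coeffMap, hφ]

variable [Group X] [Group Y]

theorem fm_map (f : X →* Y) {m : ℕ} (x : Fin (m + 1) → X) (i : Fin m) :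
    fm (f ∘ x) i = f ∘ fm x i := by
  funext j
  simp only [fm, Function.comp_apply]
  split_ifs <;> simp

theorem bd_chainMap (f : X →* Y) (m : ℕ) (z : Ch X A (m + 1)) :
    bd Y A m (chainMap f z) = chainMap f (bd X A m z) := by
  induction z using Finsupp.induction_linear with
  | zero => simp
  | add _ _ h₁ h₂ => simp only [map_add, h₁, h₂]
  | single x a =>
    simp only [chainMap_single, bd_single, map_add, map_sum, map_zsmul, fm_map]
    rfl

theorem bd_coeffMap (φ : A →+ B) (m : ℕ) (z : Ch X A (m + 1)) :
    bd X B m (coeffMap φ z) = coeffMap φ (bd X A m z) := by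
  induction z using Finsupp.induction_linear with
  | zero => simp
  | add _ _ h₁ h₂ => simp only [map_add, h₁, h₂]
  | single x a => simp only [coeffMap_single, bd_single, map_add, map_sum, map_zsmul]

def IsBarChainMap (F : ∀ m, Ch X A m →+ Ch Y B m) : Prop :=
  ∀ m z, bd Y B m (F (m + 1) z) = F m (bd X A m z)

theorem isBarChainMap_chainMap (f : X →* Y) : IsBarChainMap (A := A) fun _ => chainMap f :=
  bd_chainMap f

theorem isBarChainMap_coeffMap (φ : A →+ B) : IsBarChainMap (X := X) fun _ => coeffMap φ :=
  bd_coeffMap φ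

theorem IsBarChainMap.comp {C : Type*} [AddCommGroup C] {Z : Type*} [Group Z]
    {F : ∀ m, Ch X A m →+ Ch Y B m} {F' : ∀ m, Ch Y B m →+ Ch Z C m}
    (hF' : IsBarChainMap F') (hF : IsBarChainMap F) : IsBarChainMap fun m => (F' m).comp (F m) :=
  fun m z => by rw [AddMonoidHom.comp_apply, hF', hF, AddMonoidHom.comp_apply]

theorem IsBarChainMap.map_mem_cyc {F : ∀ m, Ch X A m →+ Ch Y B m} (hF : IsBarChainMap F)
    {m : ℕ} {z : Ch X A m} (hz : z ∈ cyc X A m) : F m z ∈ cyc Y B m := by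
  cases m with
  | zero => rfl
  | succ m =>
    change bd Y B m (F (m + 1) z) = 0
    rw [hF, show bd X A m z = 0 from hz, map_zero]

theorem IsBarChainMap.map_mem_bdry {F : ∀ m, Ch X A m →+ Ch Y B m} (hF : IsBarChainMap F)
    {m : ℕ} {z : Ch X A m} (hz : z ∈ bdry X A m) : F m z ∈ bdry Y B m := by
  obtain ⟨y, rfl⟩ := hz
  exact ⟨F (m + 1) y, hF m y⟩

end BarComplex

section InvariantChains

variable {G A B : Type*} [Group G] [AddCommGroup A] [AddCommGroup B]
  {Q : Type*} [Group Q] [MulDistribMulAction Q G]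

theorem qch_eq_chainMap (q : Q) (m : ℕ) :
    qch G A Q q m = chainMap (q • · : G → G) := rfl

theorem coeffMap_mem_invCh (φ : A →+ B) {m : ℕ} {z : Ch G A m} (hz : z ∈ invCh G A Q m) :
    coeffMap φ z ∈ invCh G B Q m := fun q => by
  rw [qch_eq_chainMap, chainMap_coeffMap, ← qch_eq_chainMap, hz q]

theorem IsBarChainMap.map_mem_cycQ {X : Type*} [Group X] {F : ∀ m, Ch X A m →+ Ch G B m}
    (hF : IsBarChainMap F) (hinv : ∀ m z, F m z ∈ invCh G B Q m) {m : ℕ} {z : Ch X A m}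
    (hz : z ∈ cyc X A m) :
    F m z ∈ cycQ G B Q m :=
  ⟨hF.map_mem_cyc hz, hinv m z⟩

end InvariantChains

section HomogeneousChains

variable {X Y A : Type*} [AddCommGroup A]

def cone (c : X) {m : ℕ} : Ch X A m →+ Ch X A (m + 1) :=
  mapDomain.addMonoidHom fun x => Fin.cons c x

theorem cone_single (c : X) {m : ℕ} (x : Fin m → X) (a : A) :
    cone c (single x a) = single (Fin.cons c x) a :=
  mapDomain_single

variable (X A) in
/-- The homogeneous differential `∑ᵢ (-1)ⁱ (x₀, …, x̂ᵢ, …, xₘ)` (see `hdiff_single`), defined by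
the recursion `∂(c, x) = x - (c, ∂x)`, which makes `cone c` a contraction. -/
def hdiff : ∀ m : ℕ, Ch X A (m + 1) →+ Ch X A m
  | 0 => mapDomain.addMonoidHom Fin.tail
  | m + 1 => liftAddHom fun x =>
      singleAddHom (Fin.tail x) - (cone (x 0)).comp ((hdiff m).comp (singleAddHom (Fin.tail x)))

theorem hdiff_zero_single (x : Fin 1 → X) (a : A) :
    hdiff X A 0 (single x a) = single (Fin.tail x) a :=
  mapDomain_single

theorem hdiff_succ_single {m : ℕ} (x : Fin (m + 2) → X) (a : A) :
    hdiff X A (m + 1) (single x a) =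
      single (Fin.tail x) a - cone (x 0) (hdiff X A m (single (Fin.tail x) a)) := by
  simp [hdiff]

theorem hdiff_cone (c : X) {m : ℕ} (z : Ch X A (m + 1)) :
    hdiff X A (m + 1) (cone c z) = z - cone c (hdiff X A m z) := by
  induction z using Finsupp.induction_linear with
  | zero => simp
  | add _ _ h₁ h₂ => simp only [map_add, h₁, h₂]; abel
  | single x a => rw [cone_single, hdiff_succ_single, Fin.tail_cons, Fin.cons_zero]

theorem hdiff_zero_cone (c : X) (z : Ch X A 0) : hdiff X A 0 (cone c z) = z := by
  induction z using Finsupp.induction_linear with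
  | zero => simp
  | add _ _ h₁ h₂ => simp only [map_add, h₁, h₂]
  | single x a => rw [cone_single, hdiff_zero_single, Fin.tail_cons]

theorem hdiff_hdiff {m : ℕ} (z : Ch X A (m + 2)) : hdiff X A m (hdiff X A (m + 1) z) = 0 := by
  induction z using Finsupp.induction_linear with
  | zero => simp
  | add _ _ h₁ h₂ => simp only [map_add, h₁, h₂, add_zero]
  | single x a =>
    rw [hdiff_succ_single, map_sub]
    cases m with
    | zero => rw [hdiff_zero_cone, sub_self]
    | succ m => rw [hdiff_cone, hdiff_hdiff, map_zero, sub_zero, sub_self]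

theorem chainMap_cone (ψ : X → Y) (c : X) {m : ℕ} (z : Ch X A m) :
    chainMap ψ (cone c z) = cone (ψ c) (chainMap ψ z) := by
  induction z using Finsupp.induction_linear with
  | zero => simp
  | add _ _ h₁ h₂ => simp only [map_add, h₁, h₂]
  | single y b => simp only [chainMap_single, cone_single, Fin.comp_cons]

theorem hdiff_chainMap (ψ : X → Y) {m : ℕ} (z : Ch X A (m + 1)) :
    hdiff Y A m (chainMap ψ z) = chainMap ψ (hdiff X A m z) := by
  induction z using Finsupp.induction_linear with
  | zero => simp
  | add _ _ h₁ h₂ => simp only [map_add, h₁, h₂]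
  | single x a =>
    cases m with
    | zero => simp only [chainMap_single, hdiff_zero_single]; rfl
    | succ m =>
      rw [chainMap_single, hdiff_succ_single, hdiff_succ_single, map_sub, chainMap_cone,
        ← hdiff_chainMap, chainMap_single]
      rfl

theorem hdiff_single : ∀ (m : ℕ) (x : Fin (m + 1) → X) (a : A),
    hdiff X A m (single x a) = ∑ j : Fin (m + 1), (-1 : ℤ) ^ (j : ℕ) • single (x ∘ j.succAbove) a
  | 0, x, a => by
    rw [hdiff_zero_single, Fin.sum_univ_one, Fin.val_zero, pow_zero, one_smul]
    exact congrArg (single · a) (funext fun i => i.elim0)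
  | m + 1, x, a => by
    rw [hdiff_succ_single, hdiff_single m, map_sum, sub_eq_add_neg, ← Finset.sum_neg_distrib]
    conv_rhs => rw [Fin.sum_univ_succ, Fin.val_zero, pow_zero, one_smul, Fin.succAbove_zero]
    congr 1
    refine Finset.sum_congr rfl fun j _ => ?_
    have hface : Fin.cons (x 0) (Fin.tail x ∘ j.succAbove) = x ∘ j.succ.succAbove := by
      refine funext fun i => Fin.cases ?_ (fun i => ?_) i
      · simp
      · simp [Fin.succ_succAbove_succ, Fin.tail]
    rw [map_zsmul, cone_single, hface, Fin.val_succ, pow_succ, mul_neg_one, neg_smul]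

end HomogeneousChains

section BarCoordinates

variable {X Y A : Type*} [Group X] [Group Y] [AddCommGroup A]

def translate (c : X) {m : ℕ} : Ch X A m →+ Ch X A m := chainMap (c * ·)

theorem translate_single (c : X) {m : ℕ} (x : Fin m → X) (a : A) :
    translate c (single x a) = single (c * x ·) a :=
  chainMap_single ..

theorem translate_one {m : ℕ} (z : Ch X A m) : translate 1 z = z := by
  induction z using Finsupp.induction_linear with
  | zero => simp
  | add _ _ h₁ h₂ => simp only [map_add, h₁, h₂]
  | single x a => simp only [translate_single, one_mul]

theorem translate_translate (c d : X) {m : ℕ} (z : Ch X A m) :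
    translate c (translate d z) = translate (c * d) z := by
  rw [translate, translate, chainMap_chainMap]
  congr 2
  funext y
  exact (mul_assoc c d y).symm

theorem hdiff_translate (c : X) {m : ℕ} (z : Ch X A (m + 1)) :
    hdiff X A m (translate c z) = translate c (hdiff X A m z) :=
  hdiff_chainMap _ z

def barCoords {m : ℕ} (x : Fin (m + 1) → X) : Fin m → X :=
  fun i => (x i.castSucc)⁻¹ * x i.succ

theorem barCoords_partialProd {m : ℕ} (g : Fin m → X) : barCoords (Fin.partialProd g) = g :=
  funext (Fin.partialProd_right_inv g)

theorem barCoords_mul_left (c : X) {m : ℕ} (x : Fin (m + 1) → X) :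
    barCoords (c * x ·) = barCoords x := by
  funext i
  simp [barCoords, mul_assoc]

theorem barCoords_map (f : X →* Y) {m : ℕ} (x : Fin (m + 1) → X) :
    barCoords (f ∘ x) = f ∘ barCoords x := by
  funext i
  simp [barCoords]

def toBar {m : ℕ} : Ch X A (m + 1) →+ Ch X A m := mapDomain.addMonoidHom barCoords

def ofBar {m : ℕ} : Ch X A m →+ Ch X A (m + 1) := mapDomain.addMonoidHom Fin.partialProd

theorem toBar_single {m : ℕ} (x : Fin (m + 1) → X) (a : A) :
    toBar (single x a) = single (barCoords x) a :=
  mapDomain_single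

theorem ofBar_single {m : ℕ} (g : Fin m → X) (a : A) :
    ofBar (single g a) = single (Fin.partialProd g) a :=
  mapDomain_single

theorem toBar_ofBar {m : ℕ} (z : Ch X A m) : toBar (ofBar z) = z := by
  rw [toBar, ofBar, mapDomain.addMonoidHom_apply, mapDomain.addMonoidHom_apply,
    ← mapDomain_comp]
  convert mapDomain_id
  exact funext barCoords_partialProd

theorem toBar_translate (c : X) {m : ℕ} (z : Ch X A (m + 1)) :
    toBar (translate c z) = toBar z := by
  rw [translate, chainMap, toBar, mapDomain.addMonoidHom_apply, mapDomain.addMonoidHom_apply,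
    mapDomain.addMonoidHom_apply, ← mapDomain_comp]
  exact congrArg (mapDomain · z) (funext (barCoords_mul_left c))

theorem toBar_chainMap (f : X →* Y) {m : ℕ} (z : Ch X A (m + 1)) :
    toBar (chainMap f z) = chainMap f (toBar z) := by
  rw [chainMap, chainMap, toBar, toBar]
  simp only [mapDomain.addMonoidHom_apply, ← mapDomain_comp]
  exact congrArg (mapDomain · z) (funext (barCoords_map f))

theorem ofBar_chainMap (f : X →* Y) {m : ℕ} (z : Ch X A m) :
    ofBar (chainMap f z) = chainMap f (ofBar z) := by
  rw [chainMap, chainMap, ofBar, ofBar]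
  simp only [mapDomain.addMonoidHom_apply, ← mapDomain_comp]
  refine congrArg (mapDomain · z) (funext fun g => funext fun j => ?_)
  induction j using Fin.induction with
  | zero => simp
  | succ j ih => simp_all [Fin.partialProd_succ]

theorem toBar_apply_ofBar_toBar {m m' : ℕ} (F : Ch X A (m + 1) →+ Ch Y A (m' + 1))
    (hF : ∀ c z, toBar (F (translate c z)) = toBar (F z)) (z : Ch X A (m + 1)) :
    toBar (F (ofBar (toBar z))) = toBar (F z) := by
  induction z using Finsupp.induction_linear with
  | zero => simp
  | add _ _ h₁ h₂ => simp only [map_add, h₁, h₂]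
  | single x a =>
    rw [toBar_single, ofBar_single, ← hF (x 0), translate_single]
    exact congrArg (toBar <| F <| single · a) (Fin.partialProd_left_inv x)

theorem barCoords_comp_succAbove_zero {m : ℕ} (x : Fin (m + 2) → X) :
    barCoords (x ∘ Fin.succAbove 0) = Fin.tail (barCoords x) := by
  funext i
  simp [barCoords, Fin.tail]

theorem barCoords_comp_succAbove_last {m : ℕ} (x : Fin (m + 2) → X) :
    barCoords (x ∘ (Fin.last (m + 1)).succAbove) = Fin.init (barCoords x) := by
  funext i
  simp [barCoords, Fin.init]

theorem fm_eq_contractNth {m : ℕ} (g : Fin (m + 1) → X) (i : Fin m) :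
    fm g i = Fin.contractNth i.castSucc (· * ·) g := by
  funext j
  rcases lt_trichotomy (j : ℕ) i with h | h | h
  · simp [fm, Fin.contractNth, h]
  · simp [fm, Fin.contractNth, Fin.ext h]
  · simp [fm, Fin.contractNth, h.not_gt, h.ne', Fin.ne_of_gt h]

theorem barCoords_comp_succAbove_succ_castSucc {m : ℕ} (x : Fin (m + 2) → X) (i : Fin m) :
    barCoords (x ∘ i.castSucc.succ.succAbove) = fm (barCoords x) i := by
  have hx : x ∘ i.castSucc.succ.succAbove =
      fun k => x 0 * (Fin.partialProd (barCoords x) ∘ i.castSucc.succ.succAbove) k := by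
    conv_lhs => rw [← Fin.partialProd_left_inv x]
    rfl
  rw [hx, barCoords_mul_left, ← Fin.partialProd_contractNth, barCoords_partialProd,
    fm_eq_contractNth]

theorem bd_toBar {m : ℕ} (z : Ch X A (m + 2)) :
    bd X A m (toBar z) = toBar (hdiff X A (m + 1) z) := by
  induction z using Finsupp.induction_linear with
  | zero => simp
  | add _ _ h₁ h₂ => simp only [map_add, h₁, h₂]
  | single x a =>
    rw [toBar_single, bd_single, hdiff_single, map_sum, Fin.sum_univ_succ, Fin.sum_univ_castSucc]
    simp only [map_zsmul, toBar_single, barCoords_comp_succAbove_zero, Fin.succ_last,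
      barCoords_comp_succAbove_last, barCoords_comp_succAbove_succ_castSucc, Fin.val_zero,
      pow_zero, one_smul, Fin.val_succ, Fin.val_castSucc, Fin.val_last, add_assoc]

theorem bd_eq_toBar_hdiff_ofBar {m : ℕ} (z : Ch X A (m + 1)) :
    bd X A m z = toBar (hdiff X A (m + 1) (ofBar z)) := by
  rw [← bd_toBar, toBar_ofBar]

end BarCoordinates

section Descent

variable {X Y A : Type*} [Group X] [Group Y] [AddCommGroup A]

def descend {m m' : ℕ} (F : Ch X A (m + 1) →+ Ch Y A (m' + 1)) : Ch X A m →+ Ch Y A m' :=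
  toBar.comp (F.comp ofBar)

theorem descend_apply {m m' : ℕ} (F : Ch X A (m + 1) →+ Ch Y A (m' + 1)) (z : Ch X A m) :
    descend F z = toBar (F (ofBar z)) := rfl

theorem isBarChainMap_descend (F : ∀ m, Ch X A (m + 1) →+ Ch Y A (m + 1))
    (hF : ∀ m z, hdiff Y A (m + 1) (F (m + 1) z) = F m (hdiff X A (m + 1) z))
    (hinv : ∀ m c z, toBar (F m (translate c z)) = toBar (F m z)) :
    IsBarChainMap fun m => descend (F m) := fun m z => by
  rw [descend_apply, descend_apply, bd_toBar, hF, bd_eq_toBar_hdiff_ofBar]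
  exact (toBar_apply_ofBar_toBar (F m) (hinv m) _).symm

end Descent

section Homotopy

variable {G Q A : Type*} [Group G] [Group Q] [MulDistribMulAction Q G] [AddCommGroup A]

local notation "K" => G ⋊[MulDistribMulAction.toMulAut Q G] Q

theorem left_inl_mul (e : G) (y : K) : (inl e * y).left = e * y.left := by
  simp

theorem chainMap_left_translate_inl (e : G) {m : ℕ} (z : Ch K A m) :
    chainMap (·.left) (translate (inl e) z) = translate e (chainMap (·.left) z) := by
  rw [translate, translate, chainMap_chainMap, chainMap_chainMap]
  congr 2
  funext y
  exact left_inl_mul e y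

def retractSubId (m : ℕ) : Ch K A m →+ Ch K A m :=
  chainMap (fun y : K => (inl y.left : K)) - AddMonoidHom.id _

theorem retractSubId_translate_inl (e : G) {m : ℕ} (z : Ch K A m) :
    retractSubId m (translate (inl e) z) = translate (inl e) (retractSubId m z) := by
  simp only [retractSubId, AddMonoidHom.sub_apply, AddMonoidHom.id_apply, map_sub, translate,
    chainMap_chainMap]
  congr 3
  funext y
  simp

theorem hdiff_retractSubId {m : ℕ} (z : Ch K A (m + 1)) :
    hdiff K A m (retractSubId (m + 1) z) = retractSubId m (hdiff K A m z) := by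
  simp only [retractSubId, AddMonoidHom.sub_apply, AddMonoidHom.id_apply, map_sub,
    hdiff_chainMap]

theorem hdiff_zero_retractSubId (z : Ch K A 1) : hdiff K A 0 (retractSubId 1 z) = 0 := by
  rw [hdiff_retractSubId, retractSubId, AddMonoidHom.sub_apply, sub_eq_zero, chainMap,
    mapDomain.addMonoidHom_apply, AddMonoidHom.id_apply]
  convert mapDomain_id

/-- The `G`-equivariant extension of `D` through the cone at `1`, defined on the `G`-basis of
tuples with `(x 0).left = 1`. -/
def coneExtension {m : ℕ} (D : Ch K A (m + 1) →+ Ch K A (m + 1)) :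
    Ch K A (m + 1) →+ Ch K A (m + 2) :=
  liftAddHom fun x => (translate (inl (x 0).left)).comp <| (cone 1).comp <|
    D.comp <| (translate (inl (x 0).left⁻¹)).comp (singleAddHom x)

theorem coneExtension_single {m : ℕ} (D : Ch K A (m + 1) →+ Ch K A (m + 1))
    (x : Fin (m + 1) → K) (a : A) :
    coneExtension D (single x a) =
      translate (inl (x 0).left) (cone 1 (D (translate (inl (x 0).left⁻¹) (single x a)))) := by
  simp [coneExtension]

theorem coneExtension_translate_inl {m : ℕ} (D : Ch K A (m + 1) →+ Ch K A (m + 1)) (e : G)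
    (z : Ch K A (m + 1)) :
    coneExtension D (translate (inl e) z) = translate (inl e) (coneExtension D z) := by
  induction z using Finsupp.induction_linear with
  | zero => simp
  | add _ _ h₁ h₂ => simp only [map_add, h₁, h₂]
  | single x a =>
    rw [translate_single, coneExtension_single, coneExtension_single, translate_single,
      translate_single, translate_translate, left_inl_mul, map_mul]
    simp [mul_assoc]

theorem hdiff_coneExtension {m : ℕ} {D : Ch K A (m + 1) →+ Ch K A (m + 1)}
    (hD : ∀ e z, D (translate (inl e) z) = translate (inl e) (D z))
    (hD₀ : ∀ z, hdiff K A m (D z) = 0) (z : Ch K A (m + 1)) :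
    hdiff K A (m + 1) (coneExtension D z) = D z := by
  induction z using Finsupp.induction_linear with
  | zero => simp
  | add _ _ h₁ h₂ => simp only [map_add, h₁, h₂]
  | single x a =>
    rw [coneExtension_single, hdiff_translate, hdiff_cone, hD₀, map_zero, sub_zero, ← hD,
      translate_translate, ← map_mul, mul_inv_cancel, map_one, translate_one]

/-- `defect m = ρ_* - id - hₘ₋₁ ∂` with `ρ y = inl y.left`; then `hₘ = coneExtension (defect m)`
is a `G`-equivariant homotopy from `id` to `ρ_*`. -/
def defect : ∀ m : ℕ, Ch K A (m + 1) →+ Ch K A (m + 1)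
  | 0 => retractSubId 1
  | m + 1 => retractSubId (m + 2) - (coneExtension (defect m)).comp (hdiff K A (m + 1))

theorem defect_translate_inl (e : G) : ∀ (m : ℕ) (z : Ch K A (m + 1)),
    defect m (translate (inl e) z) = translate (inl e) (defect m z)
  | 0, z => retractSubId_translate_inl e z
  | m + 1, z => by
    simp only [defect, AddMonoidHom.sub_apply, AddMonoidHom.comp_apply, map_sub,
      retractSubId_translate_inl, hdiff_translate, coneExtension_translate_inl]

theorem defect_hdiff (m : ℕ) (z : Ch K A (m + 2)) :
    defect m (hdiff K A (m + 1) z) = retractSubId (m + 1) (hdiff K A (m + 1) z) := by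
  cases m with
  | zero => rfl
  | succ m =>
    rw [defect, AddMonoidHom.sub_apply, AddMonoidHom.comp_apply, hdiff_hdiff, map_zero, sub_zero]

theorem hdiff_defect : ∀ (m : ℕ) (z : Ch K A (m + 1)), hdiff K A m (defect m z) = 0
  | 0, z => hdiff_zero_retractSubId z
  | m + 1, z => by
    rw [defect, AddMonoidHom.sub_apply, AddMonoidHom.comp_apply, map_sub, hdiff_retractSubId,
      hdiff_coneExtension (defect_translate_inl · m) (hdiff_defect m), defect_hdiff, sub_self]

theorem hdiff_coneExtension_defect (m : ℕ) (z : Ch K A (m + 1)) :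
    hdiff K A (m + 1) (coneExtension (defect m) z) = defect m z :=
  hdiff_coneExtension (defect_translate_inl · m) (hdiff_defect m) z

end Homotopy

section Transfer

variable {G Q A : Type*} [Group G] [Group Q] [MulDistribMulAction Q G] [AddCommGroup A]
  [Fintype Q]

local notation "K" => G ⋊[MulDistribMulAction.toMulAut Q G] Q

def qAverage {M : Type*} [AddCommGroup M] {m : ℕ} (F : Ch K A m →+ M) : Ch K A m →+ M :=
  ∑ q : Q, F.comp (translate (inr q))

theorem qAverage_apply {M : Type*} [AddCommGroup M] {m : ℕ} (F : Ch K A m →+ M) (z : Ch K A m) :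
    qAverage F z = ∑ q : Q, F (translate (inr q) z) :=
  AddMonoidHom.finsetSum_apply ..

/-- Write `q c = e q'` with `e ∈ G`: then `q' = q c.right` runs over `Q` as `q` does. -/
theorem toBar_qAverage_translate {Y : Type*} [Group Y] {m m' : ℕ} (σ : G → Y)
    (F : Ch K A m →+ Ch Y A (m' + 1))
    (hF : ∀ e z, F (translate (inl e) z) = translate (σ e) (F z)) (c : K) (z : Ch K A m) :
    toBar (qAverage F (translate c z)) = toBar (qAverage F z) := by
  simp only [qAverage_apply, map_sum, translate_translate]
  refine Fintype.sum_equiv (Equiv.mulRight c.right) _ _ fun q => ?_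
  rw [← inl_left_mul_inr_right (inr q * c), ← translate_translate, hF, toBar_translate]
  rfl

def transfer (m : ℕ) : Ch K A m →+ Ch G A m :=
  descend (qAverage (chainMap (·.left)))

theorem isBarChainMap_transfer : IsBarChainMap (transfer (G := G) (Q := Q) (A := A)) := by
  refine isBarChainMap_descend _ (fun m z => ?_) (fun m c z => ?_)
  · simp only [qAverage_apply, map_sum, hdiff_translate, hdiff_chainMap]
  · exact toBar_qAverage_translate id _ (fun e z => chainMap_left_translate_inl e z) c z

theorem transfer_mem_invCh {m : ℕ} (z : Ch K A m) : transfer m z ∈ invCh G A Q m := fun q' => by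
  let φ : G →* G := MulDistribMulAction.toMonoidHom G q'
  rw [transfer, descend_apply, qch_eq_chainMap, show (q' • · : G → G) = φ from rfl,
    ← toBar_chainMap, qAverage_apply, map_sum]
  congr 1
  refine Fintype.sum_equiv (Equiv.mulLeft q') _ _ fun q => ?_
  rw [translate, translate, chainMap_chainMap, chainMap_chainMap, chainMap_chainMap]
  congr 2
  funext y
  simp [φ, mul_smul]

theorem transfer_chainMap_inl {m : ℕ} (z : Ch G A m) :
    transfer m (chainMap (inl : G →* K) z) = ∑ q : Q, qch G A Q q m z := by
  rw [transfer, descend_apply, ofBar_chainMap, qAverage_apply, map_sum]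
  refine Finset.sum_congr rfl fun q _ => ?_
  let φ : G →* G := MulDistribMulAction.toMonoidHom G q
  have hφ : ((·.left) ∘ (inr q * ·)) ∘ ⇑(inl : G →* K) = φ := by
    funext g
    simp [φ]
  rw [translate, chainMap_chainMap, chainMap_chainMap, hφ, toBar_chainMap, toBar_ofBar]
  rfl

theorem transfer_chainMap_inl_of_mem_invCh {m : ℕ} {z : Ch G A m} (hz : z ∈ invCh G A Q m) :
    transfer m (chainMap (inl : G →* K) z) = (Fintype.card Q : ℤ) • z := by
  rw [transfer_chainMap_inl, Finset.sum_congr rfl fun q _ => hz q, Finset.sum_const,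
    Finset.card_univ, natCast_zsmul]

def barHomotopy (m : ℕ) : Ch K A m →+ Ch K A (m + 1) :=
  descend (qAverage (coneExtension (defect m)))

theorem toBar_qAverage_retractSubId {m : ℕ} (z : Ch K A m) :
    toBar (qAverage (retractSubId (m + 1)) (ofBar z)) =
      chainMap (inl : G →* K) (transfer m z) - (Fintype.card Q : ℤ) • z := by
  have hρ (w : Ch K A (m + 1)) :
      chainMap (fun y : K => (inl y.left : K)) w =
        chainMap (inl : G →* K) (chainMap (·.left) w) :=
    (chainMap_chainMap _ _ w).symm
  simp only [qAverage_apply, retractSubId, AddMonoidHom.sub_apply, AddMonoidHom.id_apply, hρ,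
    Finset.sum_sub_distrib, map_sub, map_sum, toBar_chainMap, toBar_translate, toBar_ofBar,
    transfer, descend_apply]
  rw [Finset.sum_const, Finset.card_univ, natCast_zsmul]

theorem bd_barHomotopy {m : ℕ} (z : Ch K A m) :
    bd K A m (barHomotopy m z) = toBar (qAverage (defect m) (ofBar z)) := by
  simp only [barHomotopy, descend_apply, bd_toBar, qAverage_apply, map_sum,
    hdiff_coneExtension_defect]

theorem bd_barHomotopy_zero (z : Ch K A 0) :
    bd K A 0 (barHomotopy 0 z) =
      chainMap (inl : G →* K) (transfer 0 z) - (Fintype.card Q : ℤ) • z := by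
  rw [bd_barHomotopy, defect, toBar_qAverage_retractSubId]

theorem bd_barHomotopy_succ {m : ℕ} (z : Ch K A (m + 1)) :
    bd K A (m + 1) (barHomotopy (m + 1) z) + barHomotopy m (bd K A m z) =
      chainMap (inl : G →* K) (transfer (m + 1) z) - (Fintype.card Q : ℤ) • z := by
  have hdefect (w : Ch K A (m + 2)) : qAverage (defect (m + 1)) w =
      qAverage (retractSubId (m + 2)) w -
        qAverage (coneExtension (defect m)) (hdiff K A (m + 1) w) := by
    simp only [defect, qAverage_apply, AddMonoidHom.sub_apply, AddMonoidHom.comp_apply,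
      hdiff_translate, Finset.sum_sub_distrib]
  have hinv := toBar_qAverage_translate (inl : G →* K) _
    (coneExtension_translate_inl (defect (A := A) m))
  rw [bd_barHomotopy, hdefect, map_sub, toBar_qAverage_retractSubId, barHomotopy, descend_apply,
    bd_eq_toBar_hdiff_ofBar, toBar_apply_ofBar_toBar _ hinv, sub_add_cancel]

theorem chainMap_inl_transfer_sub_mem_bdry {m : ℕ} {z : Ch K A m} (hz : z ∈ cyc K A m) :
    chainMap (inl : G →* K) (transfer m z) - (Fintype.card Q : ℤ) • z ∈ bdry K A m := by
  cases m with
  | zero => exact ⟨barHomotopy 0 z, bd_barHomotopy_zero z⟩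
  | succ m =>
    refine ⟨barHomotopy (m + 1) z, ?_⟩
    rw [← bd_barHomotopy_succ, show bd K A m z = 0 from hz, map_zero, add_zero]

variable (G Q) in
def invariantHomologyAddEquiv (φ : A →+ A) (hφ : ∀ a, φ ((Fintype.card Q : ℤ) • a) = a)
    (n : ℕ) : HQ G A Q n ≃+ Hn K A n := by
  have hinc := isBarChainMap_chainMap (A := A) (inl : G →* K)
  have htr := (isBarChainMap_coeffMap φ).comp (isBarChainMap_transfer (G := G) (Q := Q))
  refine subquotientAddEquiv (chainMap (inl : G →* K)) ((coeffMap φ).comp (transfer n))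
    (fun z hz => hinc.map_mem_cyc hz.1) ?_
    (fun z hz => htr.map_mem_cycQ (fun m z => coeffMap_mem_invCh _ (transfer_mem_invCh z)) hz) ?_
    (fun z hz => ?_) (fun z hz => ?_)
  · rintro _ ⟨y, -, rfl⟩
    exact hinc.map_mem_bdry ⟨y, rfl⟩
  · rintro _ ⟨y, rfl⟩
    exact ⟨_, coeffMap_mem_invCh _ (transfer_mem_invCh y), htr n y⟩
  · rw [AddMonoidHom.comp_apply, transfer_chainMap_inl_of_mem_invCh hz.2,
      coeffMap_zsmul_of_leftInverse _ hφ, sub_self]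
    exact zero_mem _
  · have := (isBarChainMap_coeffMap (X := K) φ).map_mem_bdry
      (chainMap_inl_transfer_sub_mem_bdry hz)
    rwa [map_sub, coeffMap_zsmul_of_leftInverse _ hφ, ← chainMap_coeffMap] at this

end Transfer

end

end InvariantHomology

open InvariantHomology in
/-- If `Q` is finite with `|Q|` invertible in `A`, then
`H_q^Q(G, A) ≅ H_q(G ⋊ Q, A)`. -/
theorem invariant_homology_iso_semidirectProduct
    (G A Q : Type*) [Group G] [AddCommGroup A] [Group Q] [MulDistribMulAction Q G] [Fintype Q]
    (hA : Function.Bijective fun a : A => (Fintype.card Q : ℤ) • a) (q : ℕ) :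
    Nonempty (HQ G A Q q ≃+ Hn (G ⋊[MulDistribMulAction.toMulAut Q G] Q) A q) := by
  let e := AddEquiv.ofBijective (zsmulAddGroupHom (α := A) (Fintype.card Q : ℤ)) hA
  exact ⟨invariantHomologyAddEquiv G Q e.symm.toAddMonoidHom e.symm_apply_apply q⟩
end

section
/- Let Q be a finite group and G a Q-group. There exists a group homomorphism ψ : (G//Q)_ab → H_1^Q(G, ℤ) from the abelianization of the orbit group to the first homology group of invariant group chains such that for every g ∈ G, ψ applied to the image of g in (G//Q)_ab equals the class of the invariant 1-chain Σ_{q∈Q} [q(g)] in H_1^Q(G, ℤ); that is, ψ commutes with the norm map N : G → H_1^Q(G, ℤ), g ↦ [Σ_{q∈Q} q(g)]. -/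
open Finsupp

namespace OrbitGroup

open SemidirectProduct

variable (G Q : Type*) [Group G] [Group Q] [MulDistribMulAction Q G]

/-- The action of `Q` on `G`, as a homomorphism `Q →* Aut(G)`. -/
abbrev phi : Q →* MulAut G := MulDistribMulAction.toMulAut Q G

/-- The set of commutators `[g, q] = g · (q g⁻¹ q⁻¹)` inside `G ⋊ Q`. -/
def commSet : Set (G ⋊[phi G Q] Q) :=
  {z | ∃ (g : G) (q : Q), z = inl g * inr q * (inl g)⁻¹ * (inr q)⁻¹}

/-- The normal closure `[G,Q]^{G ⋊ Q}` of the commutator subgroup `[G, Q]` in `G ⋊ Q`. -/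
def ncl : Subgroup (G ⋊[phi G Q] Q) := Subgroup.normalClosure (commSet G Q)

instance : (ncl G Q).Normal := Subgroup.normalClosure_normal

/-- The composite `G ↪ G ⋊ Q → (G ⋊ Q)/[G,Q]^{G ⋊ Q}`. -/
def pFull : G →* (G ⋊[phi G Q] Q) ⧸ ncl G Q :=
  (QuotientGroup.mk' (ncl G Q)).comp inl

/-- The orbit group `G⫽Q`: the image of `G` in `(G ⋊ Q)/[G,Q]^{G ⋊ Q}`. -/
def Orb : Subgroup ((G ⋊[phi G Q] Q) ⧸ ncl G Q) := (pFull G Q).range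

/-- The canonical map `p : G → G⫽Q`. -/
def pmap (g : G) : Orb G Q := ⟨pFull G Q g, ⟨g, rfl⟩⟩

end OrbitGroup

/-!
The norm map `N` is a homomorphism: the bar differential of the invariant 2-chain
`∑_q [q g | q h]` is `N h - N (g h) + N g`. It is also constant on `Q`-orbits, so
`(g, q) ↦ N g` is a homomorphism on `G ⋊ Q` that is trivial on `Q`. It therefore kills every
commutator `[g, q]`, factors through `(G ⋊ Q)/[G,Q]^{G⋊Q}`, and its restriction to `G⫽Q`,
having abelian target, factors through `(G⫽Q)_ab`.
-/

namespace InvariantHomology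

noncomputable section

variable {G A : Type*} [Group G] [AddCommGroup A] {Q : Type*} [Group Q] [MulDistribMulAction Q G]

theorem bd_single_pair (x y : G) (a : A) :
    bd G A 1 (single ![x, y] a) =
      single (fun _ => y) a - single (fun _ => x * y) a + single (fun _ => x) a := by
  have h_tail : Fin.tail ![x, y] = fun _ => y := funext fun j => by fin_cases j; rfl
  have h_init : Fin.init ![x, y] = fun _ => x := funext fun j => by fin_cases j; rfl
  have h_face : fm ![x, y] 0 = fun _ => x * y := funext fun j => by fin_cases j; rfl
  rw [bd_single, Fin.sum_univ_one, h_tail, h_init, h_face]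
  simp only [Fin.coe_ofNat_eq_mod, Nat.zero_mod, zero_add, pow_one, neg_smul, one_smul]
  abel

theorem qch_qch (q q' : Q) {n : ℕ} (x : Ch G A n) :
    qch G A Q q n (qch G A Q q' n x) = qch G A Q (q * q') n x := by
  rw [qch_mul]; rfl

variable (A Q) [Fintype Q]

def normCh (n : ℕ) : Ch G A n →+ Ch G A n := ∑ q : Q, qch G A Q q n

variable {A Q}

theorem normCh_qch (q : Q) {n : ℕ} (x : Ch G A n) :
    normCh A Q n (qch G A Q q n x) = normCh A Q n x := by
  simp only [normCh, AddMonoidHom.finsetSum_apply, qch_qch]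
  exact Fintype.sum_equiv (Equiv.mulRight q) _ _ fun _ => rfl

theorem qch_normCh (q : Q) {n : ℕ} (x : Ch G A n) :
    qch G A Q q n (normCh A Q n x) = normCh A Q n x := by
  simp only [normCh, AddMonoidHom.finsetSum_apply, map_sum, qch_qch]
  exact Fintype.sum_equiv (Equiv.mulLeft q) _ _ fun _ => rfl

theorem normCh_mem_invCh {n : ℕ} (x : Ch G A n) : normCh A Q n x ∈ invCh G A Q n :=
  fun q => qch_normCh q x

theorem bd_normCh {n : ℕ} (x : Ch G A (n + 1)) :
    bd G A n (normCh A Q (n + 1) x) = normCh A Q n (bd G A n x) := by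
  simp only [normCh, AddMonoidHom.finsetSum_apply, map_sum]
  exact Finset.sum_congr rfl fun q _ => DFunLike.congr_fun (bd_qch G A Q q n) x

variable (Q)

theorem ncyc_eq_normCh (g : G) : ncyc G Q g = normCh ℤ Q 1 (single (fun _ => g) 1) := by
  simp only [ncyc, normCh, AddMonoidHom.finsetSum_apply, qch_single]
  rfl

theorem NQ_mul (g h : G) : NQ G Q (g * h) = NQ G Q g + NQ G Q h := by
  refine Eq.symm <| QuotientAddGroup.eq_iff_sub_mem.mpr ?_
  rw [AddSubgroup.mem_addSubgroupOf]
  refine ⟨normCh ℤ Q 2 (single ![g, h] 1), normCh_mem_invCh _, ?_⟩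
  simp only [bd_normCh, bd_single_pair, map_add, map_sub, ← ncyc_eq_normCh,
    AddSubgroup.coe_sub, AddSubgroup.coe_add]
  abel

theorem NQ_smul (q : Q) (g : G) : NQ G Q (q • g) = NQ G Q g := by
  refine congrArg QuotientAddGroup.mk (Subtype.ext ?_)
  simp only [ncyc_eq_normCh, ← normCh_qch q (single (fun _ => g) (1 : ℤ)), qch_single]
  rfl

variable (G) in
def NQHom : G →* Multiplicative (HQ G ℤ Q 1) :=
  MonoidHom.mk' (fun g => .ofAdd (NQ G Q g)) fun g h => by rw [NQ_mul]; rfl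

end

end InvariantHomology

namespace OrbitGroup

open SemidirectProduct

variable {G Q M : Type*} [Group G] [Group Q] [MulDistribMulAction Q G] [Group M]
  (f : G →* M) (hf : ∀ (q : Q) (g : G), f (q • g) = f g)

def semidirectLift : G ⋊[phi G Q] Q →* M :=
  SemidirectProduct.lift f 1 fun q => MonoidHom.ext fun g => by simpa using hf q g

theorem ncl_le_ker_semidirectLift : ncl G Q ≤ (semidirectLift f hf).ker := by
  refine Subgroup.normalClosure_le_normal ?_
  rintro _ ⟨g, q, rfl⟩
  simp [semidirectLift]

def lift : Orb G Q →* M :=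
  (QuotientGroup.lift (ncl G Q) _ (ncl_le_ker_semidirectLift f hf)).comp (Orb G Q).subtype

theorem lift_pmap (g : G) : lift f hf (pmap G Q g) = f g := by
  simp [lift, pmap, pFull, semidirectLift]

end OrbitGroup

open InvariantHomology OrbitGroup in
/-- There is a homomorphism `(G⫽Q)_ab → H₁^Q(G, ℤ)` from the
abelianization of the orbit group to the first homology of invariant group chains,
commuting with the norm map `N : G → H₁^Q(G, ℤ)`, `g ↦ [∑_{q ∈ Q} [q • g]]`. -/
theorem orbitGroup_abelianization_to_first_invariant_homology
    (G Q : Type*) [Group G] [Group Q] [MulDistribMulAction Q G] [Fintype Q] :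
    ∃ ψ : Additive (Abelianization (Orb G Q)) →+ HQ G ℤ Q 1,
      ∀ g : G, ψ (Additive.ofMul (Abelianization.of (pmap G Q g))) = NQ G Q g := by
  let χ := OrbitGroup.lift (NQHom G Q) fun q g => congrArg Multiplicative.ofAdd (NQ_smul Q q g)
  refine ⟨(Abelianization.lift χ).toAdditiveLeft, fun g => ?_⟩
  change Multiplicative.toAdd (Abelianization.lift χ (Abelianization.of (pmap G Q g))) = _
  rw [Abelianization.lift_apply_of]
  exact congrArg Multiplicative.toAdd (OrbitGroup.lift_pmap _ _ g)
end

section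
/- Let G be a Q-group and let M be a Q-G module, regarded as a module over the group ring ℤ(G ⋊ Q). Then M is a free ℤ(G ⋊ Q)-module if and only if M admits a ℤG-basis on which Q acts freely; that is, if and only if there exists a subset B ⊆ M which is a basis of M as a ℤG-module, which is permuted by the action of Q, and such that the Q-action on B is free. -/
/-!
Every element of `G ⋊ Q` is uniquely `inl g * inr q`, so `k[G ⋊ Q]` is a free left `k[G]`-module
on the elements `inr q`. Consequently a family `t` in a `k[G ⋊ Q]`-module is a `k[G ⋊ Q]`-basis
exactly when `(i, q) ↦ q • t i` is a `k[G]`-basis. A `k[G ⋊ Q]`-basis thus yields a `k[G]`-basis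
on which `Q` acts freely; conversely a `k[G]`-basis with a free `Q`-action is the disjoint union
of its orbits, each a copy of `Q`, and any set of orbit representatives is a `k[G ⋊ Q]`-basis.
-/

open Function

section ScalarTower

variable {R S A ι κ : Type*} [Semiring R] [Semiring S] [AddCommMonoid A]
  [Module R S] [Module S A] [Module R A] [IsScalarTower R S A]

theorem Module.Basis.linearCombination_smul_eq_comp (b : Module.Basis κ R S) (c : ι → A) :
    ⇑(Finsupp.linearCombination R fun p : ι × κ ↦ b p.2 • c p.1) =
      Finsupp.linearCombination S c ∘ (Finsupp.mapRange.linearEquiv b.repr.symm ∘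
        Finsupp.curryLinearEquiv R) := by
  rw [Finsupp.linearCombination_smul, ← b.coe_repr_symm]
  rfl

theorem Module.Basis.linearIndependent_smul_iff (b : Module.Basis κ R S) (c : ι → A) :
    LinearIndependent R (fun p : ι × κ ↦ b p.2 • c p.1) ↔ LinearIndependent S c := by
  rw [LinearIndependent, b.linearCombination_smul_eq_comp]
  exact Injective.of_comp_iff' _ ((LinearEquiv.bijective _).comp (LinearEquiv.bijective _))

theorem Module.Basis.span_smul_eq_top_iff (b : Module.Basis κ R S) (c : ι → A) :
    Submodule.span R (Set.range fun p : ι × κ ↦ b p.2 • c p.1) = ⊤ ↔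
      Submodule.span S (Set.range c) = ⊤ := by
  rw [← Finsupp.range_linearCombination, ← Finsupp.range_linearCombination,
    LinearMap.range_eq_top, LinearMap.range_eq_top, b.linearCombination_smul_eq_comp]
  exact Surjective.of_comp_iff _ ((LinearEquiv.surjective _).comp (LinearEquiv.surjective _))

end ScalarTower

theorem MulAction.exists_injective_smul_range_eq {Q : Type*} {X : Type u} [Group Q] [MulAction Q X]
    {B : Set X} (hB : ∀ (q : Q) (b : X), b ∈ B → q • b ∈ B)
    (hfree : ∀ (q : Q) (b : X), b ∈ B → q • b = b → q = 1) :
    ∃ (Ω : Type u) (t : Ω → X), Injective (fun p : Ω × Q ↦ p.2 • t p.1) ∧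
      Set.range (fun p : Ω × Q ↦ p.2 • t p.1) = B := by
  let P : SubMulAction Q X := ⟨B, fun q _ hb ↦ hB q _ hb⟩
  have hstab (b : P) : stabilizer Q b = ⊥ :=
    (Subgroup.eq_bot_iff_forall _).2 fun q hq ↦ hfree q b b.2 (congrArg Subtype.val hq)
  let e := (selfEquivOrbitsQuotientProd hstab).symm
  refine ⟨_, fun ω : orbitRel.Quotient Q P ↦ (ω.out : X),
    Subtype.val_injective.comp e.injective, ?_⟩
  change Set.range (Subtype.val ∘ e) = B
  rw [Set.range_comp, e.range_eq_univ, Set.image_univ, Subtype.range_coe]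
  rfl

namespace SemidirectProduct

variable {k G Q : Type*} [Semiring k] [Group G] [Group Q] (φ : Q →* MulAut G)

noncomputable abbrev moduleGroupAlgebraInl :
    Module (MonoidAlgebra k G) (MonoidAlgebra k (G ⋊[φ] Q)) :=
  Module.compHom _ (MonoidAlgebra.mapDomainRingHom k (inl : G →* G ⋊[φ] Q))

attribute [local instance] moduleGroupAlgebraInl

theorem single_smul_single_inr (g : G) (q : Q) (z : k) :
    MonoidAlgebra.single g z • MonoidAlgebra.single (inr q : G ⋊[φ] Q) (1 : k) =
      MonoidAlgebra.single ⟨g, q⟩ z := by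
  change MonoidAlgebra.mapDomain _ _ * _ = _
  rw [MonoidAlgebra.mapDomain_single, MonoidAlgebra.single_mul_single, mul_one,
    mk_eq_inl_mul_inr]

noncomputable def coeffsInr : MonoidAlgebra k (G ⋊[φ] Q) →+ (Q →₀ MonoidAlgebra k G) :=
  (Finsupp.liftAddHom fun x : G ⋊[φ] Q ↦
    (Finsupp.singleAddHom x.right).comp (MonoidAlgebra.singleAddHom x.left)).comp
    MonoidAlgebra.coeffAddEquiv.toAddMonoidHom

theorem coeffsInr_single (x : G ⋊[φ] Q) (z : k) :
    coeffsInr φ (MonoidAlgebra.single x z) =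
      Finsupp.single x.right (MonoidAlgebra.single x.left z) := by
  simp [coeffsInr]

theorem linearCombination_coeffsInr (x : MonoidAlgebra k (G ⋊[φ] Q)) :
    Finsupp.linearCombination (MonoidAlgebra k G)
      (fun q ↦ MonoidAlgebra.single (inr q : G ⋊[φ] Q) (1 : k)) (coeffsInr φ x) = x := by
  induction x using MonoidAlgebra.induction_linear with
  | zero => simp
  | add x y hx hy => rw [map_add, map_add, hx, hy]
  | single x z => rw [coeffsInr_single, Finsupp.linearCombination_single, single_smul_single_inr]

theorem coeffsInr_linearCombination (l : Q →₀ MonoidAlgebra k G) :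
    coeffsInr φ (Finsupp.linearCombination (MonoidAlgebra k G)
      (fun q ↦ MonoidAlgebra.single (inr q : G ⋊[φ] Q) (1 : k)) l) = l := by
  induction l using Finsupp.induction_linear with
  | zero => simp
  | add l l' hl hl' => rw [map_add, map_add, hl, hl']
  | single q s =>
    induction s using MonoidAlgebra.induction_linear with
    | zero => simp
    | add s s' hs hs' => rw [Finsupp.single_add, map_add, map_add, hs, hs']
    | single g z =>
      rw [Finsupp.linearCombination_single, single_smul_single_inr, coeffsInr_single]

noncomputable def basisInr : Module.Basis Q (MonoidAlgebra k G) (MonoidAlgebra k (G ⋊[φ] Q)) :=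
  .mk (v := fun q ↦ MonoidAlgebra.single (inr q : G ⋊[φ] Q) (1 : k))
    (LeftInverse.injective (coeffsInr_linearCombination φ))
    (by rw [← Finsupp.range_linearCombination,
      LinearMap.range_eq_top.2 (RightInverse.surjective (linearCombination_coeffsInr φ))])

@[simp]
theorem basisInr_apply (q : Q) : basisInr φ q = MonoidAlgebra.single (inr q : G ⋊[φ] Q) (1 : k) :=
  Module.Basis.mk_apply _ _ _

variable {M ι : Type*} [AddCommMonoid M] [Module (MonoidAlgebra k (G ⋊[φ] Q)) M]
  [Module (MonoidAlgebra k G) M] [IsScalarTower (MonoidAlgebra k G) (MonoidAlgebra k (G ⋊[φ] Q)) M]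
  (t : ι → M)

theorem linearIndependent_single_inr_smul_iff :
    LinearIndependent (MonoidAlgebra k G)
        (fun p : ι × Q ↦ MonoidAlgebra.single (inr p.2 : G ⋊[φ] Q) (1 : k) • t p.1) ↔
      LinearIndependent (MonoidAlgebra k (G ⋊[φ] Q)) t := by
  simpa using (basisInr φ).linearIndependent_smul_iff t

theorem span_single_inr_smul_eq_top_iff :
    Submodule.span (MonoidAlgebra k G)
        (Set.range fun p : ι × Q ↦ MonoidAlgebra.single (inr p.2 : G ⋊[φ] Q) (1 : k) • t p.1) = ⊤ ↔
      Submodule.span (MonoidAlgebra k (G ⋊[φ] Q)) (Set.range t) = ⊤ := by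
  simpa using (basisInr φ).span_smul_eq_top_iff t

end SemidirectProduct

attribute [local instance] SemidirectProduct.moduleGroupAlgebraInl

/-- A `Q`-`G` module `M` (i.e. a module over `ℤ(G ⋊ Q)`) is free if and
only if it admits a `ℤG`-basis which is permuted by `Q` and on which `Q` acts freely. -/
theorem free_module_iff_exists_basis_with_free_action
    (G Q : Type u) [Group G] [Group Q] (φ : Q →* MulAut G)
    (M : Type u) [AddCommGroup M] [Module (MonoidAlgebra ℤ (G ⋊[φ] Q)) M] :
    Module.Free (MonoidAlgebra ℤ (G ⋊[φ] Q)) M ↔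
      ∃ B : Set M,
        (letI : Module (MonoidAlgebra ℤ G) M :=
            Module.compHom M
              (MonoidAlgebra.mapDomainRingHom ℤ (SemidirectProduct.inl : G →* G ⋊[φ] Q));
          LinearIndependent (MonoidAlgebra ℤ G) ((↑) : B → M) ∧
            Submodule.span (MonoidAlgebra ℤ G) B = ⊤)
        ∧ (∀ (q : Q) (b : M), b ∈ B →
            (MonoidAlgebra.single (SemidirectProduct.inr q : G ⋊[φ] Q) (1 : ℤ)) • b ∈ B)
        ∧ (∀ (q : Q) (b : M), b ∈ B →
            (MonoidAlgebra.single (SemidirectProduct.inr q : G ⋊[φ] Q) (1 : ℤ)) • b = b →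
              q = 1) := by
  let _ : Module (MonoidAlgebra ℤ G) M :=
    Module.compHom M (MonoidAlgebra.mapDomainRingHom ℤ (SemidirectProduct.inl : G →* G ⋊[φ] Q))
  have : IsScalarTower (MonoidAlgebra ℤ G) (MonoidAlgebra ℤ (G ⋊[φ] Q)) M :=
    ⟨fun _ r m ↦ mul_smul _ r m⟩
  let _ : MulAction Q M :=
    MulAction.compHom M ((MonoidAlgebra.of ℤ (G ⋊[φ] Q)).comp SemidirectProduct.inr)
  open SemidirectProduct in
  constructor
  · rintro ⟨⟨ι, e⟩⟩
    have hind := (linearIndependent_single_inr_smul_iff φ e).2 e.linearIndependent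
    refine ⟨_, ⟨hind.linearIndepOn_id, (span_single_inr_smul_eq_top_iff φ e).2 e.span_eq⟩, ?_, ?_⟩
    · rintro q _ ⟨⟨i, q'⟩, rfl⟩
      exact ⟨(i, q * q'), mul_smul q q' (e i)⟩
    · rintro q _ ⟨⟨i, q'⟩, rfl⟩ hfix
      have : (i, q * q') = (i, q') := hind.injective ((mul_smul q q' (e i)).trans hfix)
      simpa using congrArg Prod.snd this
  · rintro ⟨B, ⟨hind, hspan⟩, hB, hfree⟩
    obtain ⟨Ω, t, hinj, rfl⟩ := MulAction.exists_injective_smul_range_eq hB hfree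
    have ht := (linearIndependent_single_inr_smul_iff φ t).1
      ((linearIndepOn_id_range_iff hinj).1 hind)
    exact .of_basis (.mk ht ((span_single_inr_smul_eq_top_iff φ t).1 hspan).ge)
end
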